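/- arXiv:1202.6089 — 2 statements merged into one kernel-verified Lean document; each statement's English description precedes it below -/
import Mathlib

section
/- Let P be a partition of a positive integer n and let (P_1, …, P_{r+1}; a_1, …, a_r) be a U-process of length r for P. Then Σ_{i=1}^{r} s(P_i, a_i) = u_r(P), the maximum cardinality of an r-U-chain in D_P. -/
/-!
Common definitions for the poset `D_P` attached to a partition `P` of `n`,
its `U`-chains, the quantity `s(P,a)` (cardinality of a simple `U`-chain),
and `U`-processes, following Khatami, "The poset of the nilpotent commutator
of a nilpotent matrix".

A partition of `n` is encoded by its multiplicity function `np : ℕ →₀ ℕ`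
(`np p` = number of parts equal to `p`), with `np 0 = 0` and `Σ p·np p = n`.
-/

/-- Vertices are triples `(u, p, k)`. -/
abbrev Vtx : Type := ℕ × ℕ × ℕ

/-- `np` is the multiplicity function of a partition of `n`. -/
def IsPartitionOf (n : ℕ) (np : ℕ →₀ ℕ) : Prop :=
  np 0 = 0 ∧ (np.sum fun p m => p * m) = n

/-- The vertex set of the diagram `D_P`: triples `(u,p,k)` with
`1 ≤ u ≤ p` and `1 ≤ k ≤ np p`. -/
def vertexSet (np : ℕ →₀ ℕ) : Set Vtx :=
  {v | 1 ≤ v.1 ∧ v.1 ≤ v.2.1 ∧ 1 ≤ v.2.2 ∧ v.2.2 ≤ np v.2.1}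

/-- The set `S_i` for the value `a`:
`S_i = {(u,p,k) : p ∈ {a, a+1}, i ≤ u ≤ p−i+1} ∪ {(u,p,k) : p > a+1, u ∈ {i, p−i+1}}`,
a subset of the vertex set of `D_P`.  (The condition `u ≤ p - i + 1` is written
as `u + i ≤ p + 1` to avoid truncated subtraction.) -/
def Sset (np : ℕ →₀ ℕ) (i a : ℕ) : Set Vtx :=
  {v ∈ vertexSet np |
    ((v.2.1 = a ∨ v.2.1 = a + 1) ∧ i ≤ v.1 ∧ v.1 + i ≤ v.2.1 + 1) ∨
    (a + 1 < v.2.1 ∧ (v.1 = i ∨ v.1 + i = v.2.1 + 1))}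

/-- The `r`-`U`-chain `U_{b 1, …, b r} = S_1 ∪ ⋯ ∪ S_r` in `D_P`. -/
def UChain (np : ℕ →₀ ℕ) (b : ℕ → ℕ) (r : ℕ) : Set Vtx :=
  ⋃ i ∈ Set.Icc 1 r, Sset np i (b i)

/-- `b 1 < b 2 < ⋯ < b r` are positive with consecutive differences at least `2`. -/
def ValidSeq (b : ℕ → ℕ) (r : ℕ) : Prop :=
  (∀ i, 1 ≤ i → i ≤ r → 1 ≤ b i) ∧ ∀ i, 1 ≤ i → i < r → b i + 2 ≤ b (i + 1)

/-- `s(P,a) = a·n_a + (a+1)·n_{a+1} + 2·Σ_{p>a+1} n_p`, the cardinality of the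
simple `U`-chain `U_a` in `D_P`. -/
def sVal (np : ℕ →₀ ℕ) (a : ℕ) : ℕ :=
  a * np a + (a + 1) * np (a + 1) +
    2 * ∑ p ∈ np.support.filter (fun p => a + 1 < p), np p

/-- `a` is optimal for `P`: `U_a` is a maximum simple `U`-chain in `D_P`. -/
def OptimalFor (np : ℕ →₀ ℕ) (a : ℕ) : Prop :=
  1 ≤ a ∧ ∀ c, 1 ≤ c → sVal np c ≤ sVal np a

/-- `p` is a part of the partition with multiplicity function `np`. -/
def IsPart (np : ℕ →₀ ℕ) (p : ℕ) : Prop := 0 < p ∧ 0 < np p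

/-- The covering relation of the poset `D_P`:  `Cov np x y` means `y` covers `x`.
(i)  for consecutive parts `q < p` and `1 ≤ u ≤ q`, `(u, p, np p)` is covered by `(u, q, 1)`;
(ii) for consecutive parts `p < q` and `1 ≤ u ≤ p`, `(u, p, np p)` is covered by
     `(u + q − p, q, 1)`;
(iii) for a part `p`, `1 ≤ u ≤ p`, `1 ≤ k < np p`, `(u,p,k)` is covered by `(u,p,k+1)`;
(iv) for an isolated part `p` (neither `p−1` nor `p+1` is a part) and `1 ≤ u < p`,
     `(u, p, np p)` is covered by `(u+1, p, 1)`. -/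
def Cov (np : ℕ →₀ ℕ) (x y : Vtx) : Prop :=
  (∃ p q u, IsPart np p ∧ IsPart np q ∧ q < p ∧
      (∀ t, q < t → t < p → ¬ IsPart np t) ∧
      1 ≤ u ∧ u ≤ q ∧ x = (u, p, np p) ∧ y = (u, q, 1)) ∨
  (∃ p q u, IsPart np p ∧ IsPart np q ∧ p < q ∧
      (∀ t, p < t → t < q → ¬ IsPart np t) ∧
      1 ≤ u ∧ u ≤ p ∧ x = (u, p, np p) ∧ y = (u + (q - p), q, 1)) ∨
  (∃ p u k, IsPart np p ∧ 1 ≤ u ∧ u ≤ p ∧ 1 ≤ k ∧ k < np p ∧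
      x = (u, p, k) ∧ y = (u, p, k + 1)) ∨
  (∃ p u, IsPart np p ∧ ¬ IsPart np (p - 1) ∧ ¬ IsPart np (p + 1) ∧
      1 ≤ u ∧ u < p ∧ x = (u, p, np p) ∧ y = (u + 1, p, 1))

/-- The partial order of `D_P`: reflexive–transitive closure of the covering relation. -/
def leD (np : ℕ →₀ ℕ) : Vtx → Vtx → Prop := Relation.ReflTransGen (Cov np)

/-- A chain in `D_P`: a subset of the vertex set that is totally ordered by `leD`. -/
def IsChainD (np : ℕ →₀ ℕ) (C : Set Vtx) : Prop :=
  C ⊆ vertexSet np ∧ ∀ x ∈ C, ∀ y ∈ C, leD np x y ∨ leD np y x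

/-- `u_r(P)`: the maximum cardinality of an `r`-`U`-chain in `D_P`. -/
noncomputable def uMax (np : ℕ →₀ ℕ) (r : ℕ) : ℕ :=
  sSup {m | ∃ b : ℕ → ℕ, ValidSeq b r ∧ (UChain np b r).ncard = m}

/-- The relabeling injection `ι : D_{P'} → D_P` attached to removing `U_a`. -/
def iotaMap (a : ℕ) (v : Vtx) : Vtx :=
  if v.2.1 < a then v else (v.1 + 1, v.2.1 + 2, v.2.2)

/-- `iotaComp aa i = ι_1 ∘ ⋯ ∘ ι_i`, where `ι_j` is the relabeling map for `aa j`. -/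
def iotaComp (aa : ℕ → ℕ) : ℕ → Vtx → Vtx
  | 0 => id
  | i + 1 => iotaComp aa i ∘ iotaMap (aa (i + 1))

/-- `(P_1, …, P_{r+1}; a_1, …, a_r)` is a `U`-process of length `r` for `P`:
`P_1 = P`, each `a_i` is optimal for `P_i`, and `P_{i+1}` is obtained from `P_i`
by deleting the parts equal to `a_i` or `a_i + 1` and decreasing by `2` every
part greater than `a_i + 1`. -/
def IsUProcess (r : ℕ) (np : ℕ →₀ ℕ) (Ps : ℕ → ℕ →₀ ℕ) (aa : ℕ → ℕ) : Prop :=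
  Ps 1 = np ∧
    ∀ i, 1 ≤ i → i ≤ r →
      OptimalFor (Ps i) (aa i) ∧
        ∀ m, Ps (i + 1) m = if m < aa i then Ps i m else Ps i (m + 2)

/-- The subset `C_i = (ι_1 ∘ ⋯ ∘ ι_{i−1})(U_{a_i}) ⊆ D_P` of a `U`-process. -/
def Cset (Ps : ℕ → ℕ →₀ ℕ) (aa : ℕ → ℕ) (i : ℕ) : Set Vtx :=
  iotaComp aa (i - 1) '' Sset (Ps i) 1 (aa i)

/-!
Let `P'` be obtained from `P` by removing the simple `U`-chain `U_a`, and `m = n_a + n_{a+1}`.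
The layers `S_i` of an `r`-`U`-chain are pairwise disjoint, so `|U_b| = Σ_i |S_i(b_i)|`, where
`|S_i(c)|` is an explicit linear form in the multiplicities. Passing from `P` to `P'`, a layer
`S_i(c)` with `c ≤ a - 2` loses exactly `2m` vertices, while `S_{i+1}(c + 2)` with `c ≥ a` becomes
`S_i(c)`. Deleting from `b` its last entry `≤ a + 1` therefore yields an `(r-1)`-`U`-chain of
`D_{P'}` that is at most `s(P,a)` smaller, because optimality of `a` gives
`|S_{j+1}(c)| + 2jm ≤ s(P,a)` for `c ≤ a + 1`; inserting `a` (or `a + 1` right after an entry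
`a - 1`) into a sequence for `P'` shows that the bound is attained. Hence
`u_r(P) = s(P,a) + u_{r-1}(P')`, and the theorem follows by induction along the `U`-process.
-/

open Finset

theorem sum_Icc_one_succ {M : Type*} [AddCommMonoid M] (f : ℕ → M) (r : ℕ) :
    ∑ i ∈ Icc 1 (r + 1), f i = f 1 + ∑ i ∈ Icc 1 r, f (i + 1) := by
  rw [Icc_eq_cons_Ioc (by omega), sum_cons, ← Icc_add_one_left_eq_Ioc, ← map_add_right_Icc 1 r 1,
    sum_map]
  rfl

theorem exists_last_index (P : ℕ → Prop) (r : ℕ) :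
    ∃ s ≤ r, (s = 0 ∨ P s) ∧ ∀ i, s < i → i ≤ r → ¬P i := by
  classical
  exact ⟨_, Nat.findGreatest_le r,
    Nat.findGreatest_spec (P := fun s => s = 0 ∨ P s) (Nat.zero_le r) (Or.inl rfl),
    fun i hi hir h => Nat.findGreatest_is_greatest hi hir (Or.inr h)⟩

def tailCount (np : ℕ →₀ ℕ) (a : ℕ) : ℕ :=
  ∑ p ∈ np.support.filter (fun p => a + 1 < p), np p

theorem sVal_eq (np : ℕ →₀ ℕ) (a : ℕ) :
    sVal np a = a * np a + (a + 1) * np (a + 1) + 2 * tailCount np a := rfl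

theorem tailCount_eq_add_tailCount_succ (np : ℕ →₀ ℕ) (a : ℕ) :
    tailCount np a = np (a + 2) + tailCount np (a + 1) := by
  have hsplit : ∀ p, (if a + 1 < p then np p else 0) =
      (if p = a + 2 then np p else 0) + (if a + 1 + 1 < p then np p else 0) := by
    intro p; split_ifs <;> omega
  simp only [tailCount, sum_filter, hsplit, sum_add_distrib]
  congr 1
  exact np.sum_ite_self_eq' (a + 2)

theorem sVal_succ_sub_sVal (np : ℕ →₀ ℕ) (c : ℕ) :
    (sVal np (c + 1) : ℤ) - sVal np c = c * ((np (c + 2) : ℤ) - np c) := by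
  rw [sVal_eq, sVal_eq, tailCount_eq_add_tailCount_succ np c]
  push_cast
  ring

-- `|S_i|` for the value `a`, provided `2 * i ≤ a + 1`.
def sValAt (np : ℕ →₀ ℕ) (i a : ℕ) : ℕ :=
  (a + 2 - 2 * i) * np a + (a + 3 - 2 * i) * np (a + 1) + 2 * tailCount np a

theorem sValAt_one (np : ℕ →₀ ℕ) (a : ℕ) : sValAt np 1 a = sVal np a := by
  simp [sValAt, sVal_eq]

theorem cast_sValAt_succ (np : ℕ →₀ ℕ) {j c : ℕ} (h : 2 * j ≤ c) :
    (sValAt np (j + 1) c : ℤ) =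
      (c - 2 * j) * np c + (c + 1 - 2 * j) * np (c + 1) + 2 * tailCount np c := by
  rw [sValAt, show c + 2 - 2 * (j + 1) = c - 2 * j by omega,
    show c + 3 - 2 * (j + 1) = c + 1 - 2 * j by omega]
  push_cast [h, show 2 * j ≤ c + 1 by omega]
  ring

theorem cast_sValAt_succ_eq_sVal_sub (np : ℕ →₀ ℕ) {j c : ℕ} (h : 2 * j ≤ c) :
    (sValAt np (j + 1) c : ℤ) = sVal np c - 2 * j * (np c + np (c + 1)) := by
  rw [cast_sValAt_succ np h, sVal_eq]
  push_cast
  ring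

theorem sValAt_succ_add_eq_sVal (np : ℕ →₀ ℕ) {j a : ℕ} (h : 2 * j ≤ a) :
    sValAt np (j + 1) a + 2 * j * (np a + np (a + 1)) = sVal np a := by
  zify
  rw [cast_sValAt_succ_eq_sVal_sub np h]
  ring

def ssetRow (i a p : ℕ) : Finset ℕ :=
  if p = a ∨ p = a + 1 then Icc i (p + 1 - i) else if a + 1 < p then {i, p + 1 - i} else ∅

def ssetFinset (np : ℕ →₀ ℕ) (i a : ℕ) : Finset Vtx :=
  (np.support.sigma fun p => ssetRow i a p ×ˢ Icc 1 (np p)).image fun x => (x.2.1, x.1, x.2.2)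

theorem coe_ssetFinset (np : ℕ →₀ ℕ) {i a : ℕ} (hi : 1 ≤ i) (hia : 2 * i ≤ a + 1) :
    (ssetFinset np i a : Set Vtx) = Sset np i a := by
  ext ⟨u, p, k⟩
  simp only [ssetFinset, ssetRow, coe_image, coe_sigma, Set.mem_image, Set.mem_sigma_iff,
    mem_coe, Finsupp.mem_support_iff, mem_product, mem_Icc, Sset, vertexSet,
    Set.mem_ofPred_eq, Sigma.exists, Prod.mk.injEq]
  constructor
  · rintro ⟨p, ⟨u, k⟩, ⟨hp, hu, hk⟩, rfl, rfl, rfl⟩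
    split_ifs at hu
    · simp only [mem_Icc] at hu; omega
    · simp only [mem_insert, mem_singleton] at hu; omega
    · simp at hu
  · rintro ⟨⟨hu1, hup, hk1, hk2⟩, hcond⟩
    refine ⟨p, (u, k), ⟨by omega, ?_, hk1, hk2⟩, rfl, rfl, rfl⟩
    split_ifs
    · simp only [mem_Icc]; omega
    · simp only [mem_insert, mem_singleton]; omega
    · omega

theorem card_ssetRow {i a p : ℕ} (hia : 2 * i ≤ a + 1) :
    (ssetRow i a p).card = (if p = a then a + 2 - 2 * i else 0) +
      (if p = a + 1 then a + 3 - 2 * i else 0) + (if a + 1 < p then 2 else 0) := by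
  unfold ssetRow
  split_ifs <;> first | omega | simp only [Nat.card_Icc]; omega | rw [card_pair (by omega)] | rfl

theorem card_ssetFinset (np : ℕ →₀ ℕ) {i a : ℕ} (hia : 2 * i ≤ a + 1) :
    (ssetFinset np i a).card = sValAt np i a := by
  rw [ssetFinset, card_image_of_injective _ (fun ⟨_, _, _⟩ ⟨_, _, _⟩ h => by simp_all), card_sigma]
  simp only [card_product, Nat.card_Icc, add_tsub_cancel_right, card_ssetRow hia, add_mul,
    ite_mul, zero_mul, sum_add_distrib, sum_ite_eq', Finsupp.mem_support_iff]
  have hsupp : ∀ c q : ℕ, (if q ≠ 0 then c * q else 0) = c * q := by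
    intro c q; split_ifs <;> simp_all
  simp only [hsupp, sValAt, tailCount, sum_filter, mul_sum, mul_ite, mul_zero]

namespace ValidSeq

variable {b : ℕ → ℕ} {r : ℕ}

theorem add_two_mul_le (h : ValidSeq b r) {i j : ℕ} (hi : 1 ≤ i) (hij : i ≤ j) (hj : j ≤ r) :
    b i + 2 * (j - i) ≤ b j := by
  induction j, hij using Nat.le_induction with
  | base => simp
  | succ j hij ih =>
    have := h.2 j (by omega) (by omega)
    have := ih (by omega)
    omega

theorem two_mul_le (h : ValidSeq b r) {i : ℕ} (hi : 1 ≤ i) (hir : i ≤ r) : 2 * i ≤ b i + 1 := by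
  have := h.add_two_mul_le le_rfl hi hir
  have := h.1 1 le_rfl (by omega)
  omega

theorem apply_le_apply (h : ValidSeq b r) {i j : ℕ} (hi : 1 ≤ i) (hij : i ≤ j) (hj : j ≤ r) :
    b i ≤ b j :=
  (Nat.le_add_right _ _).trans (h.add_two_mul_le hi hij hj)

end ValidSeq

def eraseAt (b : ℕ → ℕ) (t : ℕ) : ℕ → ℕ := fun i => if i < t then b i else b (i + 1) - 2

def insertAt (b : ℕ → ℕ) (t x : ℕ) : ℕ → ℕ :=
  fun i => if i ≤ t then b i else if i = t + 1 then x else b (i - 1) + 2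

section insertAt

variable (b : ℕ → ℕ) {t : ℕ} (x : ℕ) {i : ℕ}

theorem insertAt_of_le (h : i ≤ t) : insertAt b t x i = b i := if_pos h

theorem insertAt_succ : insertAt b t x (t + 1) = x := by simp [insertAt]

theorem insertAt_of_lt (h : t + 1 < i) : insertAt b t x i = b (i - 1) + 2 := by
  rw [insertAt, if_neg (by omega), if_neg (by omega)]

end insertAt

theorem eraseAt_insertAt (b : ℕ → ℕ) (t x : ℕ) : eraseAt (insertAt b t x) (t + 1) = b := by
  funext i
  rw [eraseAt]
  split_ifs with h
  · exact insertAt_of_le b x (by omega)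
  · rw [insertAt_of_lt b x (by omega), Nat.add_sub_cancel, Nat.add_sub_cancel]

theorem ValidSeq.eraseAt {b : ℕ → ℕ} {r : ℕ} (h : ValidSeq b (r + 1)) (t : ℕ) :
    ValidSeq (eraseAt b t) r := by
  refine ⟨fun i hi hir => ?_, fun i hi hir => ?_⟩ <;> simp only [_root_.eraseAt]
  · split_ifs
    · exact h.1 i hi (by omega)
    · have := h.add_two_mul_le le_rfl (by omega : 1 ≤ i + 1) (by omega)
      have := h.1 1 le_rfl (by omega)
      omega
  · have h1 := h.2 i hi (by omega)
    have h2 := h.2 (i + 1) (by omega) (by omega)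
    split_ifs <;> omega

theorem ValidSeq.insertAt {b : ℕ → ℕ} {r t x : ℕ} (h : ValidSeq b r) (htr : t ≤ r) (hx : 1 ≤ x)
    (hlow : 1 ≤ t → b t + 2 ≤ x) (hhigh : t < r → x ≤ b (t + 1)) :
    ValidSeq (insertAt b t x) (r + 1) := by
  refine ⟨fun i hi hir => ?_, fun i hi hir => ?_⟩
  · obtain hit | rfl | hti : i ≤ t ∨ i = t + 1 ∨ t + 1 < i := by omega
    · rw [insertAt_of_le b x hit]; exact h.1 i hi (by omega)
    · rwa [insertAt_succ]
    · rw [insertAt_of_lt b x hti]; omega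
  · obtain hit | rfl | rfl | hti : i < t ∨ i = t ∨ i = t + 1 ∨ t + 1 < i := by omega
    · rw [insertAt_of_le b x hit.le, insertAt_of_le b x hit]
      exact h.2 i hi (by omega)
    · rw [insertAt_of_le b x le_rfl, insertAt_succ]
      exact hlow hi
    · rw [insertAt_succ, insertAt_of_lt b x (by omega), Nat.add_sub_cancel]
      have := hhigh (by omega)
      omega
    · rw [insertAt_of_lt b x hti, insertAt_of_lt b x (by omega), Nat.add_sub_cancel]
      have := h.2 (i - 1) (by omega) (by omega)
      rw [Nat.sub_add_cancel (by omega)] at this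
      omega

theorem disjoint_Sset (np : ℕ →₀ ℕ) {i j bi bj : ℕ} (hij : i < j) (hb : bi + 2 ≤ bj)
    (hj : 2 * j ≤ bj + 1) : Disjoint (Sset np i bi) (Sset np j bj) := by
  rw [Set.disjoint_left]
  rintro ⟨u, p, k⟩ ⟨-, hi⟩ ⟨-, hj⟩
  dsimp only at hi hj
  omega

def chainCard (np : ℕ →₀ ℕ) (b : ℕ → ℕ) (r : ℕ) : ℕ := ∑ i ∈ Icc 1 r, sValAt np i (b i)

theorem ncard_UChain (np : ℕ →₀ ℕ) {b : ℕ → ℕ} {r : ℕ} (hb : ValidSeq b r) :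
    (UChain np b r).ncard = chainCard np b r := by
  have hcoe : ∀ i ∈ Icc 1 r, (ssetFinset np i (b i) : Set Vtx) = Sset np i (b i) := fun i hi =>
    coe_ssetFinset np (mem_Icc.1 hi).1 (hb.two_mul_le (mem_Icc.1 hi).1 (mem_Icc.1 hi).2)
  have hU : UChain np b r = ↑((Icc 1 r).biUnion fun i => ssetFinset np i (b i)) := by
    rw [coe_biUnion, UChain, coe_Icc]
    exact Set.iUnion₂_congr fun i hi => (hcoe i (mem_Icc.2 hi)).symm
  rw [hU, Set.ncard_coe_finset, card_biUnion]
  · exact sum_congr rfl fun i hi =>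
      card_ssetFinset np (hb.two_mul_le (mem_Icc.1 hi).1 (mem_Icc.1 hi).2)
  · intro i hi j hj hij
    simp only [coe_Icc, Set.mem_Icc] at hi hj
    rw [Function.onFun, ← disjoint_coe, hcoe i (mem_Icc.2 hi), hcoe j (mem_Icc.2 hj)]
    rcases lt_or_gt_of_ne hij with h | h
    · exact disjoint_Sset np h (by have := hb.add_two_mul_le hi.1 h.le hj.2; omega)
        (hb.two_mul_le hj.1 hj.2)
    · exact (disjoint_Sset np h (by have := hb.add_two_mul_le hj.1 h.le hi.2; omega)
        (hb.two_mul_le hi.1 hi.2)).symm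

theorem chainCard_succ (np : ℕ →₀ ℕ) (b : ℕ → ℕ) (r : ℕ) :
    chainCard np b (r + 1) = chainCard np b r + sValAt np (r + 1) (b (r + 1)) :=
  sum_Icc_succ_top (by omega) _

section Derived

variable {Q Q' : ℕ →₀ ℕ} {a : ℕ} (hder : ∀ m, Q' m = if m < a then Q m else Q (m + 2))
include hder

theorem tailCount_derived_of_le {c : ℕ} (hc : a ≤ c + 2) :
    tailCount Q' c = tailCount Q (c + 2) := by
  refine sum_nbij' (· + 2) (· - 2) ?_ ?_ ?_ ?_ ?_
  · intro p hp
    simp only [mem_filter, Finsupp.mem_support_iff, hder p] at hp ⊢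
    rw [if_neg (by omega)] at hp
    omega
  · intro q hq
    simp only [mem_filter, Finsupp.mem_support_iff, hder (q - 2)] at hq ⊢
    rw [if_neg (by omega), Nat.sub_add_cancel (by omega)]
    omega
  · intro p _; simp
  · intro q hq
    simp only [mem_filter] at hq
    omega
  · intro p hp
    simp only [mem_filter] at hp
    rw [hder p, if_neg (by omega)]

theorem tailCount_derived_of_lt {c : ℕ} (hc : c + 2 ≤ a) :
    tailCount Q c = tailCount Q' c + (Q a + Q (a + 1)) := by
  obtain ⟨d, hd⟩ := Nat.exists_eq_add_of_le hc
  induction d generalizing c with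
  | zero =>
    subst hd
    rw [tailCount_eq_add_tailCount_succ, tailCount_eq_add_tailCount_succ Q (c + 1),
      tailCount_derived_of_le hder (by omega)]
    ring
  | succ d ih =>
    rw [tailCount_eq_add_tailCount_succ, tailCount_eq_add_tailCount_succ Q' c,
      ih (c := c + 1) (by omega) (by omega), hder (c + 2), if_pos (by omega)]
    ring_nf

theorem sValAt_derived_of_le {i c : ℕ} (hc : a ≤ c) :
    sValAt Q' i c = sValAt Q (i + 1) (c + 2) := by
  rw [sValAt, sValAt, hder c, if_neg (by omega), hder (c + 1), if_neg (by omega),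
    tailCount_derived_of_le hder (by omega), show c + 2 + 2 - 2 * (i + 1) = c + 2 - 2 * i by omega,
    show c + 2 + 3 - 2 * (i + 1) = c + 3 - 2 * i by omega]

theorem sValAt_derived_of_lt {i c : ℕ} (hc : c + 2 ≤ a) :
    sValAt Q i c = sValAt Q' i c + 2 * (Q a + Q (a + 1)) := by
  rw [sValAt, sValAt, hder c, if_pos (by omega), hder (c + 1), if_pos (by omega),
    tailCount_derived_of_lt hder hc]
  ring

theorem sValAt_add_sValAt_succ_derived {j c : ℕ} (hca : c + 1 = a) (hjc : 2 * j + 1 ≤ c) :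
    sValAt Q (j + 1) c + sValAt Q (j + 2) (c + 2) + 2 * j * (Q a + Q (a + 1)) =
      sValAt Q' (j + 1) c + sVal Q a := by
  subst hca
  zify
  rw [cast_sValAt_succ Q (by omega), cast_sValAt_succ Q (j := j + 1) (by omega),
    cast_sValAt_succ Q' (by omega), hder c, if_pos (by omega), hder (c + 1), if_neg (by omega),
    tailCount_derived_of_le hder (by omega), sVal_eq, tailCount_eq_add_tailCount_succ Q c,
    tailCount_eq_add_tailCount_succ Q (c + 1)]
  push_cast
  ring

theorem chainCard_derived_of_lt {b : ℕ → ℕ} {s : ℕ} (hhead : ∀ i, 1 ≤ i → i ≤ s → b i + 2 ≤ a) :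
    chainCard Q b s = chainCard Q' b s + 2 * s * (Q a + Q (a + 1)) := by
  rw [chainCard, chainCard, sum_congr rfl fun i hi => sValAt_derived_of_lt hder
    (hhead i (mem_Icc.1 hi).1 (mem_Icc.1 hi).2), sum_add_distrib, sum_const, Nat.card_Icc,
    smul_eq_mul, add_tsub_cancel_right]
  ring

theorem chainCard_add_chainCard_eraseAt {b : ℕ → ℕ} {r s : ℕ} (hs : s ≤ r)
    (htail : ∀ i, s + 1 < i → i ≤ r + 1 → a + 2 ≤ b i) :
    chainCard Q b (r + 1) + chainCard Q' b s =
      chainCard Q b (s + 1) + chainCard Q' (eraseAt b (s + 1)) r := by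
  induction r, hs using Nat.le_induction with
  | base =>
    congr 1
    exact sum_congr rfl fun i hi => by
      rw [eraseAt, if_pos (Nat.lt_succ_of_le (mem_Icc.1 hi).2)]
  | succ n hsn ih =>
    have hb := htail (n + 1 + 1) (by omega) le_rfl
    rw [chainCard_succ Q b (n + 1), chainCard_succ Q' _ n, eraseAt, if_neg (by omega),
      sValAt_derived_of_le hder (by omega), Nat.sub_add_cancel (by omega)]
    have := ih fun i hi hir => htail i hi (by omega)
    omega

theorem chainCard_eq_of_separated {b : ℕ → ℕ} {r s : ℕ} (hs : s ≤ r)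
    (hhead : ∀ i, 1 ≤ i → i ≤ s → b i + 2 ≤ a) (htail : ∀ i, s + 1 < i → i ≤ r + 1 → a + 2 ≤ b i) :
    chainCard Q b (r + 1) =
      sValAt Q (s + 1) (b (s + 1)) + 2 * s * (Q a + Q (a + 1)) +
        chainCard Q' (eraseAt b (s + 1)) r := by
  have hsplit := chainCard_add_chainCard_eraseAt hder hs htail
  rw [chainCard_succ Q b s, chainCard_derived_of_lt hder hhead] at hsplit
  omega

theorem chainCard_eq_of_pair {b : ℕ → ℕ} {r s : ℕ} (hb : ValidSeq b (r + 1)) (hs : s + 1 ≤ r)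
    (hhead : ∀ i, 1 ≤ i → i ≤ s → b i + 2 ≤ a) (hprev : b (s + 1) + 1 = a)
    (hcur : b (s + 2) = a + 1) (htail : ∀ i, s + 2 < i → i ≤ r + 1 → a + 2 ≤ b i) :
    chainCard Q b (r + 1) = sVal Q a + chainCard Q' (eraseAt b (s + 2)) r := by
  have hsplit := chainCard_add_chainCard_eraseAt hder hs htail
  have hpair := sValAt_add_sValAt_succ_derived hder hprev (j := s)
    (by have := hb.two_mul_le (i := s + 1) (by omega) (by omega); omega)
  rw [chainCard_succ Q b (s + 1), chainCard_succ Q b s, chainCard_succ Q' b s,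
    chainCard_derived_of_lt hder hhead, show s + 1 + 1 = s + 2 from rfl,
    show b (s + 2) = b (s + 1) + 2 by omega] at hsplit
  omega

end Derived

section Optimal

variable {Q : ℕ →₀ ℕ} {a : ℕ} (hopt : ∀ c, 1 ≤ c → sVal Q c ≤ sVal Q a)
include hopt

/- Abel summation: `s(c+1) - s(c) = c δ_c` while the bracket on the right changes by
`(c - 2j) δ_c`, and the weights `(c - 2j) / c` increase with `c`. -/
theorem mul_sVal_sub_le_of_optimal {j c : ℕ} (hc : 1 ≤ c) (hjc : 2 * j ≤ c) (hca : c ≤ a) :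
    ((c : ℤ) - 2 * j) * (sVal Q a - sVal Q c) ≤
      c * ((sVal Q a - 2 * j * (Q a + Q (a + 1))) - (sVal Q c - 2 * j * (Q c + Q (c + 1)))) := by
  obtain ⟨d, hd⟩ := Nat.exists_eq_add_of_le hca
  induction d generalizing c with
  | zero => subst hd; simp
  | succ d ih =>
    have ih := ih (c := c + 1) (by omega) (by omega) (by omega) (by omega)
    have hstep := sVal_succ_sub_sVal Q c
    have hX : (sVal Q (c + 1) : ℤ) ≤ sVal Q a := by exact_mod_cast hopt (c + 1) (by omega)
    have hj : (2 * j : ℤ) ≤ c := by exact_mod_cast hjc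
    push_cast at ih
    rw [show c + 1 + 1 = c + 2 by ring] at ih
    set X : ℤ := sVal Q a - sVal Q (c + 1)
    set Y : ℤ := sVal Q a - 2 * j * (Q a + Q (a + 1)) -
      (sVal Q (c + 1) - 2 * j * (Q (c + 1) + Q (c + 2)))
    have key : ((c : ℤ) - 2 * j) * X ≤ c * Y := by
      have hX0 : 0 ≤ X := sub_nonneg.2 hX
      have : ((c : ℤ) + 1) * ((c - 2 * j) * X - c * Y) ≤ 0 := by
        nlinarith [mul_le_mul_of_nonneg_left ih (by positivity : (0 : ℤ) ≤ c),
          mul_nonneg (by positivity : (0 : ℤ) ≤ 2 * j) hX0]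
      nlinarith
    linear_combination key - 2 * j * hstep

theorem sValAt_succ_add_le_sVal (ha : 1 ≤ a) {j c : ℕ} (hc : 1 ≤ c) (hjc : 2 * j ≤ c)
    (hca : c ≤ a + 1) (hja : 2 * j ≤ a) :
    sValAt Q (j + 1) c + 2 * j * (Q a + Q (a + 1)) ≤ sVal Q a := by
  zify
  rw [cast_sValAt_succ_eq_sVal_sub Q hjc]
  have hle : (sVal Q c : ℤ) ≤ sVal Q a := by exact_mod_cast hopt c hc
  have hj : (2 * j : ℤ) ≤ c := by exact_mod_cast hjc
  rcases Nat.lt_or_ge a c with hac | hca'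
  · obtain rfl : c = a + 1 := by omega
    have hstep := sVal_succ_sub_sVal Q a
    have hja' : (2 * j : ℤ) ≤ a := by exact_mod_cast hja
    have ha' : (1 : ℤ) ≤ a := by exact_mod_cast ha
    have hdec : (Q (a + 2) : ℤ) ≤ Q a := by nlinarith
    nlinarith [mul_nonneg (sub_nonneg.2 hja') (sub_nonneg.2 hdec)]
  · have h := mul_sVal_sub_le_of_optimal hopt hc hjc hca'
    have hc' : (0 : ℤ) < c := by exact_mod_cast hc
    have := (mul_nonneg_iff_of_pos_left hc').1 (le_trans (mul_nonneg (sub_nonneg.2 hj)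
      (sub_nonneg.2 hle)) h)
    linarith

end Optimal

theorem exists_chainCard_le {Q Q' : ℕ →₀ ℕ} {a : ℕ}
    (hder : ∀ m, Q' m = if m < a then Q m else Q (m + 2)) (hopt : OptimalFor Q a)
    {b : ℕ → ℕ} {r : ℕ} (hb : ValidSeq b (r + 1)) :
    ∃ b', ValidSeq b' r ∧ chainCard Q b (r + 1) ≤ sVal Q a + chainCard Q' b' r := by
  obtain ⟨s, hsr, hs, hgt⟩ := exists_last_index (fun s => b (s + 1) ≤ a + 1) r
  have htail : ∀ i, s + 1 < i → i ≤ r + 1 → a + 2 ≤ b i := fun i hi hir => by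
    have := hgt (i - 1) (by omega) (by omega)
    rw [Nat.sub_add_cancel (by omega)] at this
    omega
  refine ⟨eraseAt b (s + 1), hb.eraseAt _, ?_⟩
  obtain rfl | ⟨hs1, hbs⟩ : s = 0 ∨ 1 ≤ s ∧ b (s + 1) ≤ a + 1 := by omega
  · rw [chainCard_eq_of_separated hder hsr (by omega) htail, zero_add, sValAt_one]
    have := hopt.2 (b 1) (hb.1 1 le_rfl (by omega))
    omega
  have hstep := hb.2 s hs1 (by omega)
  by_cases hpair : b s + 1 = a
  · obtain ⟨j, rfl⟩ : ∃ j, s = j + 1 := ⟨s - 1, by omega⟩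
    refine (chainCard_eq_of_pair hder hb (by omega) (fun i hi hij => ?_) hpair
      (by show b (j + 1 + 1) = a + 1; omega) (fun i hi hir => htail i (by omega) hir)).le
    have := hb.add_two_mul_le hi (j := j + 1) (by omega) (by omega)
    omega
  · rw [chainCard_eq_of_separated hder hsr
      (fun i hi his => by have := hb.apply_le_apply hi his (by omega); omega) htail]
    have := hb.two_mul_le (i := s + 1) (by omega) (by omega)
    have := hb.two_mul_le hs1 (by omega)
    have := sValAt_succ_add_le_sVal hopt.2 hopt.1 (j := s) (c := b (s + 1)) (by omega) (by omega)
      hbs (by omega)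
    omega

theorem exists_chainCard_eq {Q Q' : ℕ →₀ ℕ} {a : ℕ}
    (hder : ∀ m, Q' m = if m < a then Q m else Q (m + 2)) (ha : 1 ≤ a)
    {b' : ℕ → ℕ} {r : ℕ} (hb' : ValidSeq b' r) :
    ∃ b, ValidSeq b (r + 1) ∧ chainCard Q b (r + 1) = sVal Q a + chainCard Q' b' r := by
  obtain ⟨s, hsr, hs, hgt⟩ := exists_last_index (fun s => b' s + 2 ≤ a) r
  have hhead : ∀ i, 1 ≤ i → i ≤ s → b' i + 2 ≤ a := fun i hi his => by
    have := hb'.apply_le_apply hi his hsr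
    omega
  have hsa : 2 * s ≤ a := by
    rcases Nat.eq_zero_or_pos s with h | h
    · omega
    · have := hb'.two_mul_le h hsr
      have := hhead s h le_rfl
      omega
  have hhigh : ∀ i, s < i → i ≤ r → b' (s + 1) ≤ b' i := fun i hi hir =>
    hb'.apply_le_apply (by omega) hi hir
  by_cases hpair : s < r ∧ b' (s + 1) + 1 = a
  · have hb := hb'.insertAt (t := s + 1) (x := a + 1) (by omega) (by omega) (fun _ => by omega)
      (fun h => by have := hb'.2 (s + 1) (by omega) h; omega)
    refine ⟨_, hb, ?_⟩
    have := chainCard_eq_of_pair hder hb (s := s) (by omega)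
      (fun i hi his => by rw [insertAt_of_le b' _ (by omega)]; exact hhead i hi his)
      (by rw [insertAt_of_le b' _ le_rfl]; exact hpair.2) (insertAt_succ b' _)
      (fun i hi hir => by
        rw [insertAt_of_lt b' _ (by omega)]
        have := hb'.add_two_mul_le (i := s + 1) (j := i - 1) (by omega) (by omega) (by omega)
        omega)
    rwa [eraseAt_insertAt] at this
  · have hb := hb'.insertAt (t := s) (x := a) hsr ha (fun h => hhead s h le_rfl)
      (fun h => by have := hgt (s + 1) (by omega) h; omega)
    refine ⟨_, hb, ?_⟩
    have := chainCard_eq_of_separated hder (b := insertAt b' s a) hsr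
      (fun i hi his => by rw [insertAt_of_le b' _ his]; exact hhead i hi his)
      (fun i hi hir => by
        rw [insertAt_of_lt b' _ hi]
        have := hgt (s + 1) (by omega) (by omega)
        have := hhigh (i - 1) (by omega) (by omega)
        omega)
    rw [this, eraseAt_insertAt, insertAt_succ, sValAt_succ_add_eq_sVal Q hsa]

def chainCards (np : ℕ →₀ ℕ) (r : ℕ) : Set ℕ := {m | ∃ b, ValidSeq b r ∧ chainCard np b r = m}

theorem isGreatest_chainCards_zero (np : ℕ →₀ ℕ) : IsGreatest (chainCards np 0) 0 := by
  refine ⟨⟨id, ⟨fun i hi h0 => by omega, fun i hi h0 => by omega⟩, rfl⟩, ?_⟩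
  rintro _ ⟨b, -, rfl⟩
  rfl

theorem isGreatest_chainCards_succ {Q Q' : ℕ →₀ ℕ} {a : ℕ}
    (hder : ∀ m, Q' m = if m < a then Q m else Q (m + 2)) (hopt : OptimalFor Q a) {r M : ℕ}
    (h : IsGreatest (chainCards Q' r) M) : IsGreatest (chainCards Q (r + 1)) (sVal Q a + M) := by
  obtain ⟨⟨b', hb', rfl⟩, hM⟩ := h
  refine ⟨exists_chainCard_eq hder hopt.1 hb', ?_⟩
  rintro _ ⟨b, hb, rfl⟩
  obtain ⟨b'', hb'', hle⟩ := exists_chainCard_le hder hopt hb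
  exact hle.trans (Nat.add_le_add_left (hM ⟨b'', hb'', rfl⟩) _)

theorem isGreatest_chainCards_of_uProcess (r : ℕ) (Ps : ℕ → ℕ →₀ ℕ) (aa : ℕ → ℕ)
    (hproc : ∀ i, 1 ≤ i → i ≤ r →
      OptimalFor (Ps i) (aa i) ∧ ∀ m, Ps (i + 1) m = if m < aa i then Ps i m else Ps i (m + 2)) :
    IsGreatest (chainCards (Ps 1) r) (∑ i ∈ Icc 1 r, sVal (Ps i) (aa i)) := by
  induction r generalizing Ps aa with
  | zero => exact isGreatest_chainCards_zero _
  | succ r ih =>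
    obtain ⟨hopt, hder⟩ := hproc 1 le_rfl (by omega)
    rw [sum_Icc_one_succ]
    exact isGreatest_chainCards_succ hder hopt
      (ih (fun i => Ps (i + 1)) (fun i => aa (i + 1)) fun i hi hir =>
        hproc (i + 1) (by omega) (by omega))

theorem uprocess_sum_eq_uMax_general
    (np : ℕ →₀ ℕ)
    (r : ℕ) (Ps : ℕ → ℕ →₀ ℕ) (aa : ℕ → ℕ) (hproc : IsUProcess r np Ps aa) :
    ∑ i ∈ Finset.Icc 1 r, sVal (Ps i) (aa i) = uMax np r := by
  obtain ⟨rfl, hstep⟩ := hproc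
  have hcards : {m | ∃ b, ValidSeq b r ∧ (UChain (Ps 1) b r).ncard = m} = chainCards (Ps 1) r := by
    ext m
    exact exists_congr fun b => and_congr_right fun hb => by rw [ncard_UChain _ hb]
  rw [uMax, hcards, (isGreatest_chainCards_of_uProcess r Ps aa hstep).csSup_eq]

/-- Theorem 2.7: for a `U`-process `(P_1,…,P_{r+1}; a_1,…,a_r)` for `P`,
`Σ_{i=1}^r s(P_i, a_i) = u_r(P)`, the maximum cardinality of an `r`-`U`-chain in `D_P`. -/
theorem uprocess_sum_eq_uMax
    (n : ℕ) (hn : 0 < n) (np : ℕ →₀ ℕ) (hP : IsPartitionOf n np)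
    (r : ℕ) (Ps : ℕ → ℕ →₀ ℕ) (aa : ℕ → ℕ) (hproc : IsUProcess r np Ps aa) :
    ∑ i ∈ Finset.Icc 1 r, sVal (Ps i) (aa i) = uMax np r :=
  uprocess_sum_eq_uMax_general np r Ps aa hproc
end

section
/- Let n > 1 and let P be a partition of n. Suppose the positive integer a is optimal for P (i.e. U_a is a maximum simple U-chain in D_P), and let P' be the partition whose multiplicity function is q ↦ n_q for q < a and q ↦ n_{q+2} for q ≥ a (the partition corresponding to the vertices of D_P not in U_a). Then for every positive integer b, s(P', b) ≤ s(P, a) − 2. -/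
section AuxUChain


lemma tail_eq (np : ℕ →₀ ℕ) (c N : ℕ) (hN : ∀ p ∈ np.support, p ≤ N) :
    ∑ p ∈ np.support.filter (fun p => c < p), np p = ∑ p ∈ Finset.Ioc c N, np p := by
  apply Finset.sum_subset
  · intro p hp
    simp only [Finset.mem_filter] at hp
    exact Finset.mem_Ioc.2 ⟨hp.2, hN p hp.1⟩
  · intro p hp hnp
    by_contra h
    exact hnp (Finset.mem_filter.2 ⟨Finsupp.mem_support_iff.2 h, (Finset.mem_Ioc.1 hp).1⟩)

lemma shift_sum (np : ℕ →₀ ℕ) (c N : ℕ) :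
    ∑ p ∈ Finset.Ioc c N, np (p + 2) = ∑ p ∈ Finset.Ioc (c+2) (N+2), np p := by
  apply Finset.sum_nbij' (fun p => p + 2) (fun p => p - 2) <;>
    simp_all [Finset.mem_Ioc] <;> omega

lemma exists_min_part (np : ℕ →₀ ℕ) (c N : ℕ) (hN : ∀ p ∈ np.support, p + 1 ≤ N)
    (hT : ∃ p ∈ Finset.Ioc c N, np p ≠ 0) :
    ∃ m, c < m ∧ 1 ≤ np m ∧
      ∑ p ∈ Finset.Ioc c N, np p = np m + np (m+1) + ∑ p ∈ Finset.Ioc (m+1) N, np p := by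
  obtain ⟨p0, hp0, hnp0⟩ := hT
  have hp0s : p0 ∈ np.support.filter (fun p => c < p) := by
    simp only [Finset.mem_filter, Finsupp.mem_support_iff]
    exact ⟨hnp0, (Finset.mem_Ioc.1 hp0).1⟩
  set F := np.support.filter (fun p => c < p) with hF
  have hFne : F.Nonempty := ⟨p0, hp0s⟩
  set m := F.min' hFne with hm
  have hmF : m ∈ F := F.min'_mem hFne
  have hmsup : m ∈ np.support := (Finset.mem_filter.1 hmF).1
  have hcm : c < m := (Finset.mem_filter.1 hmF).2
  have hmN : m + 1 ≤ N := hN m hmsup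
  refine ⟨m, hcm, Nat.one_le_iff_ne_zero.2 (Finsupp.mem_support_iff.1 hmsup), ?_⟩
  have h1 : ∑ p ∈ Finset.Ioc c (m-1), np p = 0 := by
    apply Finset.sum_eq_zero
    intro p hp
    rw [Finset.mem_Ioc] at hp
    by_contra hne
    have hpF : p ∈ F := by
      rw [hF, Finset.mem_filter, Finsupp.mem_support_iff]; exact ⟨hne, hp.1⟩
    have := F.min'_le p hpF
    omega
  have s1 : ∑ p ∈ Finset.Ioc c (m-1), np p + ∑ p ∈ Finset.Ioc (m-1) N, np p
      = ∑ p ∈ Finset.Ioc c N, np p := Finset.sum_Ioc_consecutive _ (by omega) (by omega)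
  have s2 : ∑ p ∈ Finset.Ioc (m-1) (m+1), np p + ∑ p ∈ Finset.Ioc (m+1) N, np p
      = ∑ p ∈ Finset.Ioc (m-1) N, np p := Finset.sum_Ioc_consecutive _ (by omega) (by omega)
  have s3 : ∑ p ∈ Finset.Ioc (m-1) (m+1), np p = np m + np (m+1) := by
    have h2 : Finset.Ioc (m-1) (m+1) = {m, m+1} := by
      ext x; simp only [Finset.mem_Ioc, Finset.mem_insert, Finset.mem_singleton]; omega
    rw [h2, Finset.sum_pair (by omega)]
  omega

lemma sVal_eq_s16 (np : ℕ →₀ ℕ) (c N : ℕ) (hN : ∀ p ∈ np.support, p ≤ N) :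
    sVal np c = c * np c + (c+1) * np (c+1) + 2 * ∑ p ∈ Finset.Ioc (c+1) N, np p := by
  unfold sVal; rw [tail_eq np (c+1) N hN]

lemma part_mult_pos (n : ℕ) (hn : 1 < n) (np : ℕ →₀ ℕ) (hP : IsPartitionOf n np)
    (a : ℕ) (hopt : OptimalFor np a) : 1 ≤ np a + np (a+1) := by
  obtain ⟨ha1, hmax⟩ := hopt
  by_contra h
  push_neg at h
  have hA : np a = 0 := by omega
  have hC : np (a+1) = 0 := by omega
  set N := np.support.sup id + a + 10 with hNdef
  have hN1 : ∀ p ∈ np.support, p + 1 ≤ N := by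
    intro p hp
    have := Finset.le_sup (f := id) hp
    simp only [id] at this
    omega
  have hN : ∀ p ∈ np.support, p ≤ N := fun p hp => by have := hN1 p hp; omega
  have ea : sVal np a = 2 * ∑ p ∈ Finset.Ioc (a+1) N, np p := by
    rw [sVal_eq_s16 np a N hN, hA, hC]; ring
  by_cases hT : ∃ p ∈ Finset.Ioc (a+1) N, np p ≠ 0
  · obtain ⟨m, hcm, hm1, hsplit⟩ := exists_min_part np (a+1) N hN1 hT
    have hmle : sVal np m ≤ sVal np a := hmax m (by omega)
    rw [sVal_eq_s16 np m N hN] at hmle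
    have f1 : 3 * np m ≤ m * np m := Nat.mul_le_mul_right _ (by omega)
    have f2 : 2 * np (m+1) ≤ (m+1) * np (m+1) := Nat.mul_le_mul_right _ (by omega)
    omega
  · push_neg at hT
    have hz : ∑ p ∈ Finset.Ioc (a+1) N, np p = 0 := Finset.sum_eq_zero hT
    have hsupne : np.support.Nonempty := by
      rw [Finset.nonempty_iff_ne_empty]
      intro he
      have : (np.sum fun p m => p * m) = 0 := by
        rw [Finsupp.sum, he, Finset.sum_empty]
      rw [hP.2] at this; omega
    obtain ⟨p, hp⟩ := hsupne
    have hnp0 : np p ≠ 0 := Finsupp.mem_support_iff.1 hp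
    have hp1 : 1 ≤ p := by
      rcases Nat.eq_zero_or_pos p with h0 | h0
      · rw [h0] at hnp0; exact absurd hP.1 hnp0
      · exact h0
    have hple : sVal np p ≤ sVal np a := hmax p hp1
    rw [sVal_eq_s16 np p N hN] at hple
    have f1 : 1 * 1 ≤ p * np p := Nat.mul_le_mul hp1 (by omega)
    omega

lemma sVal_opt_ge_two (n : ℕ) (hn : 1 < n) (np : ℕ →₀ ℕ) (hP : IsPartitionOf n np)
    (a : ℕ) (hopt : OptimalFor np a) : 2 ≤ sVal np a := by
  have hL1 := part_mult_pos n hn np hP a hopt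
  obtain ⟨ha1, hmax⟩ := hopt
  set N := np.support.sup id + a + 10 with hNdef
  have hN1 : ∀ p ∈ np.support, p + 1 ≤ N := by
    intro p hp
    have := Finset.le_sup (f := id) hp
    simp only [id] at this
    omega
  have hN : ∀ p ∈ np.support, p ≤ N := fun p hp => by have := hN1 p hp; omega
  rw [sVal_eq_s16 np a N hN]
  rcases Nat.lt_or_ge a 2 with h2 | h2
  · -- a = 1
    have ha : a = 1 := by omega
    subst ha
    norm_num at hL1 ⊢
    rcases Nat.lt_or_ge (np 1 + 2 * np 2) 2 with hsm | hsm
    · -- np 2 = 0, np 1 = 1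
      have h1 : np 1 = 1 := by omega
      have h2' : np 2 = 0 := by omega
      -- show tail ≥ 1
      have hTpos : 1 ≤ ∑ p ∈ Finset.Ioc 2 N, np p := by
        by_contra hz
        push_neg at hz
        have hz0 : ∑ p ∈ Finset.Ioc 2 N, np p = 0 := by omega
        rw [Finset.sum_eq_zero_iff] at hz0
        have hsub : np.support = {1} := by
          apply Finset.Subset.antisymm
          · intro p hp
            have hnp0 : np p ≠ 0 := Finsupp.mem_support_iff.1 hp
            have hpN : p ≤ N := hN p hp
            have : p = 1 := by
              by_contra hne
              rcases Nat.lt_or_ge p 3 with hp3 | hp3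
              · interval_cases p
                · exact hnp0 hP.1
                · exact hne rfl
                · exact hnp0 h2'
              · exact hnp0 (hz0 p (Finset.mem_Ioc.2 ⟨by omega, hpN⟩))
            simp [this]
          · intro p hp
            simp only [Finset.mem_singleton] at hp
            subst hp
            exact Finsupp.mem_support_iff.2 (by omega)
        have := hP.2
        rw [Finsupp.sum, hsub, Finset.sum_singleton, h1] at this
        omega
      omega
    · omega
  · -- a ≥ 2
    have f1 : 2 * np a ≤ a * np a := Nat.mul_le_mul_right _ (by omega)
    have f2 : 2 * np (a+1) ≤ (a+1) * np (a+1) := Nat.mul_le_mul_right _ (by omega)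
    omega

end AuxUChain

/-- Claim in Proposition 2.11: if `U_a` is a maximum simple `U`-chain
in `D_P` (`n > 1`) and `P'` is the partition of the vertices of `D_P ∖ U_a`, then
every simple `U`-chain of `D_{P'}` has cardinality at most `s(P,a) − 2`. -/
theorem step_sVal_drops_by_two
    (n : ℕ) (hn : 1 < n) (np : ℕ →₀ ℕ) (hP : IsPartitionOf n np)
    (a : ℕ) (hopt : OptimalFor np a)
    (np' : ℕ →₀ ℕ) (hnp' : ∀ q, np' q = if q < a then np q else np (q + 2)) :
    ∀ b, 1 ≤ b → sVal np' b + 2 ≤ sVal np a := by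
  intro b hb
  have hL1 := part_mult_pos n hn np hP a hopt
  have ha1 : 1 ≤ a := hopt.1
  have hmax : ∀ c, 1 ≤ c → sVal np c ≤ sVal np a := hopt.2
  set N := np.support.sup id + a + b + 10 with hNdef
  have hN1 : ∀ p ∈ np.support, p + 1 ≤ N := by
    intro p hp
    have := Finset.le_sup (f := id) hp
    simp only [id] at this
    omega
  have hN : ∀ p ∈ np.support, p ≤ N := fun p hp => by have := hN1 p hp; omega
  have hN2 : ∀ p ∈ np.support, p ≤ N + 2 := fun p hp => by have := hN1 p hp; omega
  have hNq : ∀ q ∈ np'.support, q ≤ N := by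
    intro q hq
    rw [Finsupp.mem_support_iff, hnp' q] at hq
    by_cases h : q < a
    · omega
    · rw [if_neg h] at hq
      have := hN (q + 2) (Finsupp.mem_support_iff.2 hq)
      omega
  have e' : sVal np' b = b * np' b + (b+1) * np' (b+1) + 2 * ∑ p ∈ Finset.Ioc (b+1) N, np' p :=
    sVal_eq_s16 np' b N hNq
  rcases lt_trichotomy (b+1) a with hba | hba | hba
  · -- Case b + 1 < a
    have h1 : np' b = np b := by rw [hnp' b, if_pos (by omega)]
    have h2 : np' (b+1) = np (b+1) := by rw [hnp' (b+1), if_pos (by omega)]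
    rw [h1, h2] at e'
    have hsplit : ∑ p ∈ Finset.Ioc (b+1) (a-1), np' p + ∑ p ∈ Finset.Ioc (a-1) N, np' p
        = ∑ p ∈ Finset.Ioc (b+1) N, np' p :=
      Finset.sum_Ioc_consecutive _ (by omega) (by omega)
    have hlow : ∑ p ∈ Finset.Ioc (b+1) (a-1), np' p = ∑ p ∈ Finset.Ioc (b+1) (a-1), np p := by
      apply Finset.sum_congr rfl
      intro p hp
      rw [Finset.mem_Ioc] at hp
      rw [hnp' p, if_pos (by omega)]
    have hhigh : ∑ p ∈ Finset.Ioc (a-1) N, np' p = ∑ p ∈ Finset.Ioc (a+1) (N+2), np p := by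
      rw [show ∑ p ∈ Finset.Ioc (a-1) N, np' p = ∑ p ∈ Finset.Ioc (a-1) N, np (p+2) from
        Finset.sum_congr rfl fun p hp => by
          rw [Finset.mem_Ioc] at hp; rw [hnp' p, if_neg (by omega)],
        shift_sum np (a-1) N, show a - 1 + 2 = a + 1 by omega]
    have eb : sVal np b = b * np b + (b+1) * np (b+1) + 2 * ∑ p ∈ Finset.Ioc (b+1) (N+2), np p :=
      sVal_eq_s16 np b (N+2) hN2
    have hs1 : ∑ p ∈ Finset.Ioc (b+1) (a-1), np p + ∑ p ∈ Finset.Ioc (a-1) (N+2), np p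
        = ∑ p ∈ Finset.Ioc (b+1) (N+2), np p :=
      Finset.sum_Ioc_consecutive _ (by omega) (by omega)
    have hs2 : ∑ p ∈ Finset.Ioc (a-1) (a+1), np p + ∑ p ∈ Finset.Ioc (a+1) (N+2), np p
        = ∑ p ∈ Finset.Ioc (a-1) (N+2), np p :=
      Finset.sum_Ioc_consecutive _ (by omega) (by omega)
    have hs3 : ∑ p ∈ Finset.Ioc (a-1) (a+1), np p = np a + np (a+1) := by
      rw [show Finset.Ioc (a-1) (a+1) = {a, a+1} by
        ext x; simp only [Finset.mem_Ioc, Finset.mem_insert, Finset.mem_singleton]; omega,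
        Finset.sum_pair (by omega)]
    have hble := hmax b hb
    rw [eb] at hble
    omega
  · -- Case b + 1 = a
    subst hba
    have hL1' : 1 ≤ np (b+1) + np (b+2) := by
      have : b + 1 + 1 = b + 2 := rfl
      rw [this] at hL1
      exact hL1
    have h1 : np' b = np b := by rw [hnp' b, if_pos (by omega)]
    have h2 : np' (b+1) = np (b+3) := by
      rw [hnp' (b+1), if_neg (by omega)]
    rw [h1, h2] at e'
    have hhigh : ∑ p ∈ Finset.Ioc (b+1) N, np' p = ∑ p ∈ Finset.Ioc (b+3) (N+2), np p := by
      rw [show ∑ p ∈ Finset.Ioc (b+1) N, np' p = ∑ p ∈ Finset.Ioc (b+1) N, np (p+2) from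
        Finset.sum_congr rfl fun p hp => by
          rw [Finset.mem_Ioc] at hp; rw [hnp' p, if_neg (by omega)],
        shift_sum np (b+1) N]
    rw [hhigh] at e'
    have eb : sVal np b = b * np b + (b+1) * np (b+1) + 2 * ∑ p ∈ Finset.Ioc (b+1) (N+2), np p :=
      sVal_eq_s16 np b (N+2) hN2
    have ea : sVal np (b+1) = (b+1) * np (b+1) + (b+2) * np (b+2)
        + 2 * ∑ p ∈ Finset.Ioc (b+2) (N+2), np p := sVal_eq_s16 np (b+1) (N+2) hN2
    have ea1 : sVal np (b+2) = (b+2) * np (b+2) + (b+3) * np (b+3)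
        + 2 * ∑ p ∈ Finset.Ioc (b+3) (N+2), np p := sVal_eq_s16 np (b+2) (N+2) hN2
    have hs1 : ∑ p ∈ Finset.Ioc (b+1) (b+2), np p + ∑ p ∈ Finset.Ioc (b+2) (N+2), np p
        = ∑ p ∈ Finset.Ioc (b+1) (N+2), np p :=
      Finset.sum_Ioc_consecutive _ (by omega) (by omega)
    have hs1' : ∑ p ∈ Finset.Ioc (b+1) (b+2), np p = np (b+2) := by
      rw [show Finset.Ioc (b+1) (b+2) = {b+2} by
        ext x; simp only [Finset.mem_Ioc, Finset.mem_singleton]; omega, Finset.sum_singleton]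
    have hs2 : ∑ p ∈ Finset.Ioc (b+2) (b+3), np p + ∑ p ∈ Finset.Ioc (b+3) (N+2), np p
        = ∑ p ∈ Finset.Ioc (b+2) (N+2), np p :=
      Finset.sum_Ioc_consecutive _ (by omega) (by omega)
    have hs2' : ∑ p ∈ Finset.Ioc (b+2) (b+3), np p = np (b+3) := by
      rw [show Finset.Ioc (b+2) (b+3) = {b+3} by
        ext x; simp only [Finset.mem_Ioc, Finset.mem_singleton]; omega, Finset.sum_singleton]
    have hble := hmax b hb
    have ha1le := hmax (b+2) (by omega)
    rw [eb, ea] at hble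
    rw [ea1, ea] at ha1le
    -- derive np b ≤ np (b+2)
    have r1 : (b+2) * np (b+2) = b * np (b+2) + 2 * np (b+2) := by ring
    have hAC : np b ≤ np (b+2) := by
      have hmul : b * np b ≤ b * np (b+2) := by omega
      exact Nat.le_of_mul_le_mul_left hmul (by omega)
    -- derive np (b+3) ≤ np (b+1)
    have r2 : (b+3) * np (b+3) = (b+1) * np (b+3) + 2 * np (b+3) := by ring
    have hDB : np (b+3) ≤ np (b+1) := by
      have hmul : (b+1) * np (b+3) ≤ (b+1) * np (b+1) := by omega
      exact Nat.le_of_mul_le_mul_left hmul (by omega)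
    -- final inequality
    rw [e', ea]
    have m1 : b * np b ≤ b * np (b+2) := Nat.mul_le_mul_left _ hAC
    have m2 : (b-1) * np (b+3) ≤ (b-1) * np (b+1) := Nat.mul_le_mul_left _ hDB
    have r3 : (b+1) * np (b+3) = (b-1) * np (b+3) + 2 * np (b+3) := by
      rw [← Nat.add_mul]
      congr 1
      omega
    have r4 : (b+1) * np (b+1) = (b-1) * np (b+1) + 2 * np (b+1) := by
      rw [← Nat.add_mul]
      congr 1
      omega
    omega
  · -- Case a ≤ b
    have h1 : np' b = np (b+2) := by rw [hnp' b, if_neg (by omega)]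
    have h2 : np' (b+1) = np (b+3) := by rw [hnp' (b+1), if_neg (by omega)]
    rw [h1, h2] at e'
    have hhigh : ∑ p ∈ Finset.Ioc (b+1) N, np' p = ∑ p ∈ Finset.Ioc (b+3) (N+2), np p := by
      rw [show ∑ p ∈ Finset.Ioc (b+1) N, np' p = ∑ p ∈ Finset.Ioc (b+1) N, np (p+2) from
        Finset.sum_congr rfl fun p hp => by
          rw [Finset.mem_Ioc] at hp; rw [hnp' p, if_neg (by omega)],
        shift_sum np (b+1) N]
    rw [hhigh] at e'
    have eb2 : sVal np (b+2) = (b+2) * np (b+2) + (b+3) * np (b+3)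
        + 2 * ∑ p ∈ Finset.Ioc (b+3) (N+2), np p := sVal_eq_s16 np (b+2) (N+2) hN2
    by_cases hDE : 1 ≤ np (b+2) + np (b+3)
    · have hle := hmax (b+2) (by omega)
      rw [eb2] at hle
      have f1 : (b+2) * np (b+2) = b * np (b+2) + 2 * np (b+2) := by ring
      have f2 : (b+3) * np (b+3) = (b+1) * np (b+3) + 2 * np (b+3) := by ring
      omega
    · push_neg at hDE
      have hD : np (b+2) = 0 := by omega
      have hE : np (b+3) = 0 := by omega
      rw [hD, hE] at e'
      simp only [Nat.mul_zero, Nat.zero_add, Nat.add_zero] at e'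
      by_cases hT : ∃ p ∈ Finset.Ioc (b+3) (N+2), np p ≠ 0
      · obtain ⟨m, hcm, hm1, hsplit⟩ :=
          exists_min_part np (b+3) (N+2) (fun p hp => by have := hN1 p hp; omega) hT
        have hmle := hmax m (by omega)
        rw [sVal_eq_s16 np m (N+2) hN2] at hmle
        have f1 : 4 * np m ≤ m * np m := Nat.mul_le_mul_right _ (by omega)
        have f2 : 2 * np (m+1) ≤ (m+1) * np (m+1) := Nat.mul_le_mul_right _ (by omega)
        omega
      · push_neg at hT
        have hz : ∑ p ∈ Finset.Ioc (b+3) (N+2), np p = 0 := Finset.sum_eq_zero hT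
        have := sVal_opt_ge_two n hn np hP a hopt
        omega
end
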